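/- arXiv:2102.13095 — 3 statements merged into one kernel-verified Lean document; each statement's English description precedes it below -/
import Mathlib

section
/- Let 𝒢 be a context-free grammar with L(𝒢) ≠ ∅, and suppose 𝒢 contains more than one production with the same nonterminal N on the left-hand side. Then there exists a production P of N such that the grammar 𝒢' obtained from 𝒢 by removing all productions of N other than P satisfies L(𝒢') ≠ ∅. -/
open scoped Classical

namespace CfgPrune

open ContextFreeGrammar

variable {T : Type}

/-- Derivation in exactly `n` steps. -/
def DerivesIn (g : ContextFreeGrammar T) :
    List (Symbol T g.NT) → List (Symbol T g.NT) → ℕ → Prop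
  | u, v, 0 => u = v
  | u, v, n + 1 => ∃ s, g.Produces u s ∧ DerivesIn g s v n

lemma derivesIn_of_derives {g : ContextFreeGrammar T} {u v : List (Symbol T g.NT)}
    (h : g.Derives u v) : ∃ n, DerivesIn g u v n := by
  induction h using Relation.ReflTransGen.head_induction_on with
  | refl => exact ⟨0, rfl⟩
  | head hp _ ih =>
    obtain ⟨n, hn⟩ := ih
    exact ⟨n + 1, _, hp, hn⟩

lemma derives_of_derivesIn {g : ContextFreeGrammar T} {n : ℕ} :
    ∀ {u v : List (Symbol T g.NT)}, DerivesIn g u v n → g.Derives u v := by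
  induction n with
  | zero => intro u v h; exact h ▸ Relation.ReflTransGen.refl
  | succ n ih =>
    rintro u v ⟨s, hus, hsv⟩
    exact (Relation.ReflTransGen.single hus).trans (ih hsv)

/-- All symbols of `w` are terminal. -/
def AllTerm {N : Type*} (w : List (Symbol T N)) : Prop :=
  ∀ s ∈ w, ∃ t, s = Symbol.terminal t

lemma allTerm_map (w : List T) {N : Type*} :
    AllTerm (List.map (Symbol.terminal : T → Symbol T N) w) := by
  intro s hs
  simp only [List.mem_map] at hs
  obtain ⟨t, _, rfl⟩ := hs
  exact ⟨t, rfl⟩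

lemma exists_map_of_allTerm {N : Type*} :
    ∀ {w : List (Symbol T N)}, AllTerm w → ∃ u : List T, w = List.map Symbol.terminal u := by
  intro w
  induction w with
  | nil => exact fun _ => ⟨[], rfl⟩
  | cons a l ih =>
    intro h
    obtain ⟨t, rfl⟩ := h a (by simp)
    obtain ⟨u, hu⟩ := ih (fun s hs => h s (by simp [hs]))
    exact ⟨t :: u, by simp [hu]⟩

lemma allTerm_append_left {N : Type*} {p q : List (Symbol T N)} (h : AllTerm (p ++ q)) :
    AllTerm p := fun s hs => h s (by simp [hs])

lemma allTerm_append_right {N : Type*} {p q : List (Symbol T N)} (h : AllTerm (p ++ q)) :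
    AllTerm q := fun s hs => h s (by simp [hs])

/-- Rewriting a singleton nonterminal. -/
lemma rewrites_singleton {N : Type*} {r : ContextFreeRule T N} {A : N}
    {s : List (Symbol T N)} (h : r.Rewrites [Symbol.nonterminal A] s) :
    r.input = A ∧ s = r.output := by
  obtain ⟨p, q, hpq, hs⟩ := h.exists_parts
  cases p with
  | cons a l =>
    have := congrArg List.length hpq
    simp at this
  | nil =>
    simp only [List.nil_append] at hpq hs
    cases q with
    | cons b m =>
      have := congrArg List.length hpq
      simp at this
    | nil =>
      simp only [List.append_nil] at hpq hs
      have : Symbol.nonterminal A = (Symbol.nonterminal r.input : Symbol T N) := by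
        simpa using hpq
      exact ⟨(Symbol.nonterminal.inj this).symm, hs⟩

/-- Decomposition of a counted derivation starting from a concatenation. -/
lemma derivesIn_append {g : ContextFreeGrammar T} :
    ∀ {n : ℕ} {p q w : List (Symbol T g.NT)}, DerivesIn g (p ++ q) w n →
      ∃ wp wq a b, w = wp ++ wq ∧ a + b = n ∧ DerivesIn g p wp a ∧ DerivesIn g q wq b := by
  intro n
  induction n with
  | zero =>
    intro p q w h
    exact ⟨p, q, 0, 0, h.symm, rfl, rfl, rfl⟩
  | succ n ih =>
    rintro p q w ⟨s, ⟨r, hr, hrw⟩, hsw⟩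
    obtain ⟨x, y, hxy, hs⟩ := hrw.exists_parts
    rw [List.append_assoc] at hxy
    rcases List.append_eq_append_iff.mp hxy with ⟨a', hx, hq⟩ | ⟨c', hp, hc⟩
    · -- the rewritten nonterminal lies in `q`
      have hs' : s = p ++ (a' ++ r.output ++ y) := by
        subst hs hx; simp
      obtain ⟨wp, wq, a, b, hw, hab, hdp, hdq⟩ := ih (hs' ▸ hsw)
      refine ⟨wp, wq, a, b + 1, hw, by omega, hdp, ?_⟩
      refine ⟨a' ++ r.output ++ y, ⟨r, hr, ?_⟩, hdq⟩
      rw [hq, ← List.append_assoc]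
      exact r.rewrites_of_exists_parts a' y
    · cases c' with
      | nil =>
        -- nonterminal at the start of `q`
        simp only [List.append_nil] at hp
        simp only [List.nil_append] at hc
        have hs' : s = p ++ (r.output ++ y) := by
          subst hs hp; simp
        obtain ⟨wp, wq, a, b, hw, hab, hdp, hdq⟩ := ih (hs' ▸ hsw)
        refine ⟨wp, wq, a, b + 1, hw, by omega, hdp, ?_⟩
        refine ⟨r.output ++ y, ⟨r, hr, ?_⟩, hdq⟩
        rw [← hc]
        simpa using r.rewrites_of_exists_parts [] y
      | cons d t =>
        -- nonterminal inside `p`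
        have hd : d = Symbol.nonterminal r.input ∧ y = t ++ q := by
          constructor
          · have := congrArg (fun l => l.head?) hc
            simpa using this.symm
          · simpa using congrArg List.tail hc
        obtain ⟨rfl, rfl⟩ := hd
        have hs' : s = (x ++ r.output ++ t) ++ q := by
          subst hs; simp
        obtain ⟨wp, wq, a, b, hw, hab, hdp, hdq⟩ := ih (hs' ▸ hsw)
        refine ⟨wp, wq, a + 1, b, hw, by omega, ?_, hdq⟩
        refine ⟨x ++ r.output ++ t, ⟨r, hr, ?_⟩, hdp⟩
        rw [hp]
        simpa using r.rewrites_of_exists_parts x t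

/-- If a string containing nonterminal `N` derives a terminal word in `n` steps,
then `[N]` derives some terminal word in at most `n` steps. -/
lemma extract_nt {g : ContextFreeGrammar T} {N : g.NT} {n : ℕ}
    {u w : List (Symbol T g.NT)} (hd : DerivesIn g u w n) (hw : AllTerm w)
    (hmem : Symbol.nonterminal N ∈ u) :
    ∃ m ≤ n, ∃ w0, AllTerm w0 ∧ DerivesIn g [Symbol.nonterminal N] w0 m := by
  obtain ⟨p, q, rfl⟩ := List.append_of_mem hmem
  have hu : p ++ Symbol.nonterminal N :: q = p ++ ([Symbol.nonterminal N] ++ q) := by simp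
  rw [hu] at hd
  obtain ⟨wp, wrest, a, b, hw1, hab1, hdp, hdrest⟩ := derivesIn_append hd
  obtain ⟨wm, wq, c, e, hw2, hce, hdm, hdq⟩ := derivesIn_append hdrest
  refine ⟨c, by omega, wm, ?_, hdm⟩
  subst hw1 hw2
  exact allTerm_append_left (allTerm_append_right hw)

/-- The grammar obtained by pruning all `N`-rules except `P`. -/
noncomputable abbrev mkG (g : ContextFreeGrammar T) (N : g.NT) (P : ContextFreeRule T g.NT) :
    ContextFreeGrammar T :=
  ContextFreeGrammar.mk g.NT g.initial (g.rules.filter (fun r => r.input ≠ N ∨ r = P))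

/-- If every derivation of a terminal word from `[N]` takes at least `n0` steps, then any
derivation of a terminal word in fewer than `n0` steps uses no `N`-rule, hence survives
pruning. -/
lemma prune_derives_of_small {g : ContextFreeGrammar T} {N : g.NT}
    {P : ContextFreeRule T g.NT} {n0 : ℕ}
    (hmin : ∀ m < n0, ∀ w0, AllTerm w0 → ¬ DerivesIn g [Symbol.nonterminal N] w0 m) :
    ∀ {k}, k < n0 → ∀ {s w : List (Symbol T g.NT)}, DerivesIn g s w k → AllTerm w →
      (mkG g N P).Derives s w := by
  intro k
  induction k with
  | zero =>
    intro _ s w h _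
    exact h ▸ Relation.ReflTransGen.refl
  | succ k ih =>
    rintro hk s w ⟨t, ⟨r, hr, hrw⟩, htw⟩ hw
    by_cases hrN : r.input = N
    · exfalso
      have hmem : Symbol.nonterminal N ∈ s := by
        obtain ⟨x, y, hxy, -⟩ := hrw.exists_parts
        rw [hxy, hrN]
        simp
      obtain ⟨m, hm, w0, hw0, hder⟩ :=
        extract_nt (n := k + 1) ⟨t, ⟨r, hr, hrw⟩, htw⟩ hw hmem
      exact hmin m (by omega) w0 hw0 hder
    · have hr' : r ∈ (mkG g N P).rules := by
        simp only [mkG, Finset.mem_filter]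
        exact ⟨hr, Or.inl hrN⟩
      exact Relation.ReflTransGen.head ⟨r, hr', hrw⟩ (ih (by omega) htw hw)

/-- If `N` derives some terminal word, then there is an `N`-rule `P` such that `N` derives a
terminal word in the pruned grammar. -/
lemma exists_good_rule {g : ContextFreeGrammar T} {N : g.NT}
    (hprod : ∃ m, ∃ w0, AllTerm w0 ∧ DerivesIn g [Symbol.nonterminal N] w0 m) :
    ∃ P ∈ g.rules, P.input = N ∧
      ∃ w0, AllTerm w0 ∧ (mkG g N P).Derives [Symbol.nonterminal N] w0 := by
  classical
  set n0 := Nat.find hprod with hn0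
  obtain ⟨w0, hw0, hder⟩ := Nat.find_spec hprod
  have hmin : ∀ m < n0, ∀ w1, AllTerm w1 → ¬ DerivesIn g [Symbol.nonterminal N] w1 m := by
    intro m hm w1 hw1 hder1
    exact Nat.find_min hprod hm ⟨w1, hw1, hder1⟩
  cases hn : n0 with
  | zero =>
    exfalso
    rw [← hn0, hn] at hder
    have : ([Symbol.nonterminal N] : List (Symbol T g.NT)) = w0 := hder
    obtain ⟨t, ht⟩ := hw0 (Symbol.nonterminal N) (this ▸ by simp)
    cases ht
  | succ n1 =>
    rw [← hn0, hn] at hder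
    obtain ⟨s, ⟨r, hr, hrw⟩, hsw⟩ := hder
    obtain ⟨hrN, rfl⟩ := rewrites_singleton hrw
    refine ⟨r, hr, hrN, w0, hw0, ?_⟩
    have htail : (mkG g N r).Derives r.output w0 :=
      prune_derives_of_small hmin (by omega) hsw hw0
    refine Relation.ReflTransGen.head ⟨r, ?_, ?_⟩ htail
    · simp only [mkG, Finset.mem_filter]
      exact ⟨hr, Or.inr trivial⟩
    · rw [← hrN]
      exact ContextFreeRule.Rewrites.input_output

/-- Main induction: any derivation of a terminal word can be mimicked (possibly yielding a
different terminal word) in the pruned grammar, provided `N` derives a terminal word there. -/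
lemma main_ind {g : ContextFreeGrammar T} {N : g.NT} {P : ContextFreeRule T g.NT}
    (hPder : ∃ w0, AllTerm w0 ∧ (mkG g N P).Derives [Symbol.nonterminal N] w0) :
    ∀ n : ℕ, ∀ u w : List (Symbol T g.NT), DerivesIn g u w n → AllTerm w →
      ∃ w', AllTerm w' ∧ (mkG g N P).Derives u w' := by
  intro n
  induction n using Nat.strong_induction_on with
  | _ n ih =>
    intro u w hd hw
    cases n with
    | zero => exact ⟨w, hw, hd ▸ Relation.ReflTransGen.refl⟩
    | succ n =>
      obtain ⟨s, ⟨r, hr, hrw⟩, hsw⟩ := hd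
      by_cases hrN : r.input = N
      · obtain ⟨x, y, hu, hs⟩ := hrw.exists_parts
        rw [List.append_assoc] at hs
        obtain ⟨wx, wrest, a, b, hw1, hab, hdx, hdrest⟩ := derivesIn_append (hs ▸ hsw)
        obtain ⟨wm, wy, c, e, hw2, hce, hdm, hdy⟩ := derivesIn_append hdrest
        subst hw1 hw2
        have hwx : AllTerm wx := allTerm_append_left hw
        have hwy : AllTerm wy :=
          allTerm_append_right (allTerm_append_right hw)
        obtain ⟨w1', hw1', hder1⟩ := ih a (by omega) x wx hdx hwx
        obtain ⟨w2', hw2', hder2⟩ := ih e (by omega) y wy hdy hwy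
        obtain ⟨w0, hw0, hder0⟩ := hPder
        refine ⟨w1' ++ (w0 ++ w2'), ?_, ?_⟩
        · intro z hz
          simp only [List.mem_append] at hz
          rcases hz with hz | hz | hz
          exacts [hw1' z hz, hw0 z hz, hw2' z hz]
        · have hu' : u = x ++ ([Symbol.nonterminal N] ++ y) := by
            rw [hu, hrN, List.append_assoc]
          rw [hu']
          have d1 : (mkG g N P).Derives (x ++ ([Symbol.nonterminal N] ++ y))
              (w1' ++ ([Symbol.nonterminal N] ++ y)) := hder1.append_right _
          have d2 : (mkG g N P).Derives (w1' ++ ([Symbol.nonterminal N] ++ y))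
              (w1' ++ (w0 ++ y)) := (hder0.append_right y).append_left w1'
          have d3 : (mkG g N P).Derives (w1' ++ (w0 ++ y))
              (w1' ++ (w0 ++ w2')) := (hder2.append_left w0).append_left w1'
          exact (d1.trans d2).trans d3
      · have hr' : r ∈ (mkG g N P).rules := by
          simp only [mkG, Finset.mem_filter]
          exact ⟨hr, Or.inl hrN⟩
        obtain ⟨w', hw', hder'⟩ := ih n (by omega) s w hsw hw
        exact ⟨w', hw', Relation.ReflTransGen.head ⟨r, hr', hrw⟩ hder'⟩


end CfgPrune

/-- Let `g` be a context-free grammar with nonempty language, and suppose `g`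
has more than one production with the nonterminal `N` on the left-hand side.
Then there is a production `P` of `N` such that removing all productions of `N`
other than `P` leaves the language nonempty. -/
theorem exists_prune_production_of_language_nonempty
    {T : Type} (g : ContextFreeGrammar T) (N : g.NT)
    (hne : g.language.Nonempty)
    (hmult : 1 < (g.rules.filter (fun r => r.input = N)).card) :
    ∃ P ∈ g.rules, P.input = N ∧
      (ContextFreeGrammar.mk g.NT g.initial
          (g.rules.filter (fun r => r.input ≠ N ∨ r = P))).language.Nonempty := by
  classical
  obtain ⟨w, hw⟩ := hne
  change w ∈ g.language at hw
  rw [ContextFreeGrammar.mem_language_iff] at hw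
  obtain ⟨n, hd⟩ := CfgPrune.derivesIn_of_derives hw
  by_cases hprod : ∃ m, ∃ w0 : List (Symbol T g.NT), CfgPrune.AllTerm (T := T) w0 ∧
      CfgPrune.DerivesIn g [Symbol.nonterminal N] w0 m
  · obtain ⟨P, hP, hPN, hPder⟩ := CfgPrune.exists_good_rule hprod
    obtain ⟨w', hw', hder'⟩ :=
      CfgPrune.main_ind hPder n _ _ hd (CfgPrune.allTerm_map w)
    obtain ⟨u, rfl⟩ := CfgPrune.exists_map_of_allTerm hw'
    exact ⟨P, hP, hPN, u, hder'⟩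
  · push_neg at hprod
    obtain ⟨P, hPf⟩ := Finset.card_pos.mp
      (by omega : 0 < (g.rules.filter (fun r => r.input = N)).card)
    rw [Finset.mem_filter] at hPf
    refine ⟨P, hPf.1, hPf.2, w, ?_⟩
    have hmin : ∀ m < n + 1, ∀ w0, CfgPrune.AllTerm w0 →
        ¬ CfgPrune.DerivesIn g [Symbol.nonterminal N] w0 m :=
      fun m _ w0 hw0 hder => hprod m w0 hw0 hder
    exact CfgPrune.prune_derives_of_small (P := P) hmin (Nat.lt_succ_self n) hd
      (CfgPrune.allTerm_map w)
end

section
/- Let P = (Q, Γ, Δ) be a pushdown system and A₀ a P-automaton accepting the set R of configurations. Let A be a P-automaton with the same state set and final states as A₀ that (i) contains all transitions of A₀ and (ii) is saturated. Then A accepts every configuration in pre*(R). -/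
/-- `boolM M` replaces every nonzero entry of `M` by `1`. -/
def boolM {m : ℕ} (M : Matrix (Fin m) (Fin m) ℕ) : Matrix (Fin m) (Fin m) ℕ :=
  fun i j => if M i j = 0 then 0 else 1

/-- Entrywise order on matrices. -/
def MatLE {m : ℕ} (A B : Matrix (Fin m) (Fin m) ℕ) : Prop :=
  ∀ i j, A i j ≤ B i j

/-- `NfaPath δ i w j` : in the NFA over alphabet `Γ` with state set `{1,…,m}`
and transition relation `δ`, there is a path from state `i` to state `j`
reading the word `w`. -/
inductive NfaPath {m : ℕ} {Γ : Type} [DecidableEq Γ]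
    (δ : Finset (Fin m × Γ × Fin m)) : Fin m → List Γ → Fin m → Prop
  | nil (i : Fin m) : NfaPath δ i [] i
  | cons {i j k : Fin m} {A : Γ} {w : List Γ} :
      (i, A, j) ∈ δ → NfaPath δ j w k → NfaPath δ i (A :: w) k

/-- A `P`-automaton with transition relation `δ` is saturated (w.r.t. the
pushdown rules `Δ`) if for every rule `((p,A),(q,w)) ∈ Δ` and every path in the
automaton from `q` to a state `s` reading `w`, the transition `(p,A,s)` is
in `δ`. -/
def Saturated {m : ℕ} {Γ : Type} [DecidableEq Γ]
    (Δ : Finset ((Fin m × Γ) × (Fin m × List Γ)))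
    (δ : Finset (Fin m × Γ × Fin m)) : Prop :=
  ∀ (p q s : Fin m) (A : Γ) (w : List Γ),
    ((p, A), (q, w)) ∈ Δ → NfaPath δ q w s → (p, A, s) ∈ δ

/-- The `A`-transition matrix `M^A` of an automaton with transitions `δ`:
entry `(i,j)` is `1` iff `(i, A, j) ∈ δ`. -/
def transMat {m : ℕ} {Γ : Type} [DecidableEq Γ]
    (δ : Finset (Fin m × Γ × Fin m)) (A : Γ) : Matrix (Fin m) (Fin m) ℕ :=
  fun i j => if (i, A, j) ∈ δ then 1 else 0

/-- The rule matrix `T^{A,w}` of a pushdown system with control states `Q` and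
rules `Δ`: entry `(i,j)` is `1` iff `i, j ∈ Q` and `((i,A),(j,w)) ∈ Δ`. -/
def ruleMat {m : ℕ} {Γ : Type} [DecidableEq Γ] (Q : Finset (Fin m))
    (Δ : Finset ((Fin m × Γ) × (Fin m × List Γ))) (A : Γ) (w : List Γ) :
    Matrix (Fin m) (Fin m) ℕ :=
  fun i j => if i ∈ Q ∧ j ∈ Q ∧ ((i, A), (j, w)) ∈ Δ then 1 else 0

/-- One step of the pushdown system with rules `Δ`:
`(p, A :: γ) → (q, w ++ γ)` whenever `((p,A),(q,w)) ∈ Δ`. -/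
def PDSStep {m : ℕ} {Γ : Type} [DecidableEq Γ]
    (Δ : Finset ((Fin m × Γ) × (Fin m × List Γ)))
    (c c' : Fin m × List Γ) : Prop :=
  ∃ (p q : Fin m) (A : Γ) (w γ : List Γ),
    ((p, A), (q, w)) ∈ Δ ∧ c = (p, A :: γ) ∧ c' = (q, w ++ γ)

/-- A `P`-automaton with transitions `δ` and final states `F` accepts the
configuration `c = (q, w)` iff there is a path from `q` to a final state
reading `w`. -/
def AcceptsConfig {m : ℕ} {Γ : Type} [DecidableEq Γ]
    (δ : Finset (Fin m × Γ × Fin m)) (F : Finset (Fin m))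
    (c : Fin m × List Γ) : Prop :=
  ∃ f ∈ F, NfaPath δ c.1 c.2 f

lemma NfaPath.mono {m : ℕ} {Γ : Type} [DecidableEq Γ]
    {δ₀ δ : Finset (Fin m × Γ × Fin m)} (hsub : δ₀ ⊆ δ)
    {i k : Fin m} {w : List Γ} (h : NfaPath δ₀ i w k) : NfaPath δ i w k := by
  induction h with
  | nil i => exact NfaPath.nil i
  | cons ht _ ih => exact NfaPath.cons (hsub ht) ih

lemma NfaPath.split {m : ℕ} {Γ : Type} [DecidableEq Γ]
    {δ : Finset (Fin m × Γ × Fin m)} {i k : Fin m} {u v : List Γ}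
    (h : NfaPath δ i (u ++ v) k) : ∃ j, NfaPath δ i u j ∧ NfaPath δ j v k := by
  induction u generalizing i with
  | nil => exact ⟨i, NfaPath.nil i, h⟩
  | cons A u ih =>
    cases h with
    | cons ht hrest =>
      obtain ⟨j, h1, h2⟩ := ih hrest
      exact ⟨j, NfaPath.cons ht h1, h2⟩

/-- If a `P`-automaton `A` (transitions `δ`) contains all transitions of the
`P`-automaton `A₀` (transitions `δ₀`, final states `F`) and is saturated, then
`A` accepts every configuration in `pre*(R)`, where `R` is the set of
configurations accepted by `A₀`. -/
theorem saturated_accepts_preStar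
    {m : ℕ} {Γ : Type} [Fintype Γ] [DecidableEq Γ]
    (Q : Finset (Fin m)) (Δ : Finset ((Fin m × Γ) × (Fin m × List Γ)))
    (hΔ : ∀ r ∈ Δ, r.1.1 ∈ Q ∧ r.2.1 ∈ Q ∧ r.2.2.length ≤ 2)
    (δ₀ δ : Finset (Fin m × Γ × Fin m)) (F : Finset (Fin m))
    (hsub : δ₀ ⊆ δ) (hsat : Saturated Δ δ)
    (q : Fin m) (hq : q ∈ Q) (w : List Γ)
    (hpre : ∃ c', Relation.ReflTransGen (PDSStep Δ) (q, w) c' ∧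
      AcceptsConfig δ₀ F c') :
    AcceptsConfig δ F (q, w) := by
  obtain ⟨c', hsteps, hacc⟩ := hpre
  clear hq
  suffices h : AcceptsConfig δ F ((q, w) : Fin m × List Γ) from h
  generalize (q, w) = c at hsteps ⊢
  induction hsteps using Relation.ReflTransGen.head_induction_on with
  | refl =>
    obtain ⟨f, hf, hp⟩ := hacc
    exact ⟨f, hf, hp.mono hsub⟩
  | head hstep _ ih =>
    obtain ⟨p, q', A, u, γ, hrule, hc, hc'⟩ := hstep
    obtain ⟨f, hf, hp⟩ := ih
    rw [hc'] at hp
    obtain ⟨s, h1, h2⟩ := NfaPath.split hp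
    subst hc
    exact ⟨f, hf, NfaPath.cons (hsat p q' s A u hrule h1) h2⟩
end

section
/- Fix a pushdown system P = (Q, Γ, Δ), an initial configuration (q₀, γ₀) ∈ Q × Γ, and a P-automaton A₀ accepting the set R of configurations. If a certificate exists, then (q₀, γ₀) ∉ pre*(R), i.e., no configuration of R is reachable from (q₀, γ₀). -/
/-- A certificate of pushdown non-reachability: a family of `m × m` matrices
`M^A`, `M^{A,B}`, `M^{A,B,C}_1`, `M^{A,B,C}_2` over the nonnegative integers,
with each `M^A` a 0–1 matrix, satisfying `P^A ≤ M^A`, `T^{A,ε} ≤ M^A`,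
`M^{A,B} = T^{A,B}·M^B`, `bool(M^{A,B}) ≤ M^A`, `M^{A,B,C}_1 = T^{A,BC}·M^B`,
`M^{A,B,C}_2 = M^{A,B,C}_1·M^C`, `bool(M^{A,B,C}_2) ≤ M^A`, and
`(M^{γ₀})_{q₀,f} = 0` for all final states `f ∈ F`. -/
def IsCertificate {m : ℕ} {Γ : Type} [DecidableEq Γ]
    (Q : Finset (Fin m)) (Δ : Finset ((Fin m × Γ) × (Fin m × List Γ)))
    (δ₀ : Finset (Fin m × Γ × Fin m)) (F : Finset (Fin m))
    (q₀ : Fin m) (γ₀ : Γ)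
    (M : Γ → Matrix (Fin m) (Fin m) ℕ)
    (MAB : Γ → Γ → Matrix (Fin m) (Fin m) ℕ)
    (M1 M2 : Γ → Γ → Γ → Matrix (Fin m) (Fin m) ℕ) : Prop :=
  (∀ (A : Γ) (i j : Fin m), M A i j ≤ 1) ∧
  (∀ A B C : Γ,
    MatLE (transMat δ₀ A) (M A) ∧
    MatLE (ruleMat Q Δ A []) (M A) ∧
    MAB A B = ruleMat Q Δ A [B] * M B ∧
    MatLE (boolM (MAB A B)) (M A) ∧
    M1 A B C = ruleMat Q Δ A [B, C] * M B ∧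
    M2 A B C = M1 A B C * M C ∧
    MatLE (boolM (M2 A B C)) (M A)) ∧
  (∀ f ∈ F, M γ₀ q₀ f = 0)

section Aux

variable {m : ℕ} {Γ : Type} [DecidableEq Γ]

/-- Paths over an abstract (Prop-valued) transition relation. -/
inductive PathS (R : Fin m → Γ → Fin m → Prop) : Fin m → List Γ → Fin m → Prop
  | nil (i : Fin m) : PathS R i [] i
  | cons {i j k : Fin m} {A : Γ} {w : List Γ} :
      R i A j → PathS R j w k → PathS R i (A :: w) k

/-- The saturation of the automaton `δ₀` with respect to rules `Δ`. -/
inductive Sat (δ₀ : Finset (Fin m × Γ × Fin m))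
    (Δ : Finset ((Fin m × Γ) × (Fin m × List Γ))) : Fin m → Γ → Fin m → Prop
  | base {i : Fin m} {A : Γ} {j : Fin m} : (i, A, j) ∈ δ₀ → Sat δ₀ Δ i A j
  | pop {p A q} : ((p, A), (q, ([] : List Γ))) ∈ Δ → Sat δ₀ Δ p A q
  | swap {p A q B s} : ((p, A), (q, [B])) ∈ Δ → Sat δ₀ Δ q B s → Sat δ₀ Δ p A s
  | push {p A q B C t s} : ((p, A), (q, [B, C])) ∈ Δ → Sat δ₀ Δ q B t →
      Sat δ₀ Δ t C s → Sat δ₀ Δ p A s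

lemma pathS_append_split {R : Fin m → Γ → Fin m → Prop} :
    ∀ {u v : List Γ} {i k : Fin m}, PathS R i (u ++ v) k →
      ∃ j, PathS R i u j ∧ PathS R j v k := by
  intro u
  induction u with
  | nil => intro v i k h; exact ⟨i, PathS.nil i, h⟩
  | cons A u ih =>
      intro v i k h
      cases h with
      | cons hst hrest =>
          obtain ⟨j, h1, h2⟩ := ih hrest
          exact ⟨j, PathS.cons hst h1, h2⟩

lemma nfaPath_lift {δ₀ : Finset (Fin m × Γ × Fin m)}
    {Δ : Finset ((Fin m × Γ) × (Fin m × List Γ))}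
    {i : Fin m} {w : List Γ} {j : Fin m} (h : NfaPath δ₀ i w j) :
    PathS (Sat δ₀ Δ) i w j := by
  induction h with
  | nil i => exact PathS.nil i
  | cons hmem _ ih => exact PathS.cons (Sat.base hmem) ih

lemma pathS_nil_inv {R : Fin m → Γ → Fin m → Prop} {i j : Fin m}
    (h : PathS R i ([] : List Γ) j) : i = j := by
  cases h; rfl

lemma pathS_single_inv {R : Fin m → Γ → Fin m → Prop} {i j : Fin m} {A : Γ}
    (h : PathS R i [A] j) : R i A j := by
  cases h with
  | cons hst hrest => rwa [pathS_nil_inv hrest] at hst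

lemma sat_entry_pos {Q : Finset (Fin m)}
    {Δ : Finset ((Fin m × Γ) × (Fin m × List Γ))}
    (hΔ : ∀ r ∈ Δ, r.1.1 ∈ Q ∧ r.2.1 ∈ Q ∧ r.2.2.length ≤ 2)
    {δ₀ : Finset (Fin m × Γ × Fin m)} {F : Finset (Fin m)}
    {q₀ : Fin m} {γ₀ : Γ}
    {M : Γ → Matrix (Fin m) (Fin m) ℕ}
    {MAB : Γ → Γ → Matrix (Fin m) (Fin m) ℕ}
    {M1 M2 : Γ → Γ → Γ → Matrix (Fin m) (Fin m) ℕ}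
    (hc : IsCertificate Q Δ δ₀ F q₀ γ₀ M MAB M1 M2) :
    ∀ {p : Fin m} {A : Γ} {s : Fin m}, Sat δ₀ Δ p A s → 1 ≤ M A p s := by
  intro p A s h
  induction h with
  | base hmem =>
      rename_i i A j
      have h1 := (hc.2.1 A A A).1 i j
      have : transMat δ₀ A i j = 1 := by simp [transMat, hmem]
      omega
  | pop hmem =>
      rename_i p A q
      obtain ⟨hp, hq, -⟩ := hΔ _ hmem
      have h1 := (hc.2.1 A A A).2.1 p q
      have : ruleMat Q Δ A ([] : List Γ) p q = 1 := by simp [ruleMat, hp, hq, hmem]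
      omega
  | swap hmem hsq ih =>
      rename_i p A q B s
      obtain ⟨hp, hq, -⟩ := hΔ _ hmem
      obtain ⟨-, -, hEq, hBool, -⟩ := hc.2.1 A B B
      have hr : ruleMat Q Δ A [B] p q = 1 := by simp [ruleMat, hp, hq, hmem]
      have hsum : 1 ≤ MAB A B p s := by
        rw [hEq, Matrix.mul_apply]
        calc 1 = ruleMat Q Δ A [B] p q * 1 := by rw [hr]
          _ ≤ ruleMat Q Δ A [B] p q * M B q s := Nat.mul_le_mul_left _ ih
          _ ≤ _ := Finset.single_le_sum
                (f := fun k => ruleMat Q Δ A [B] p k * M B k s)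
                (fun _ _ => Nat.zero_le _) (Finset.mem_univ q)
      have hb : boolM (MAB A B) p s = 1 := by
        simp only [boolM]; rw [if_neg]; omega
      have := hBool p s
      omega
  | push hmem hs1 hs2 ih1 ih2 =>
      rename_i p A q B C t s
      obtain ⟨hp, hq, -⟩ := hΔ _ hmem
      obtain ⟨-, -, -, -, hE1, hE2, hBool⟩ := hc.2.1 A B C
      have hr : ruleMat Q Δ A [B, C] p q = 1 := by simp [ruleMat, hp, hq, hmem]
      have h1 : 1 ≤ M1 A B C p t := by
        rw [hE1, Matrix.mul_apply]
        calc 1 = ruleMat Q Δ A [B, C] p q * 1 := by rw [hr]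
          _ ≤ ruleMat Q Δ A [B, C] p q * M B q t := Nat.mul_le_mul_left _ ih1
          _ ≤ _ := Finset.single_le_sum
                (f := fun k => ruleMat Q Δ A [B, C] p k * M B k t)
                (fun _ _ => Nat.zero_le _) (Finset.mem_univ q)
      have h2 : 1 ≤ M2 A B C p s := by
        rw [hE2, Matrix.mul_apply]
        calc 1 = 1 * 1 := rfl
          _ ≤ M1 A B C p t * M C t s := Nat.mul_le_mul h1 ih2
          _ ≤ _ := Finset.single_le_sum
                (f := fun k => M1 A B C p k * M C k s)
                (fun _ _ => Nat.zero_le _) (Finset.mem_univ t)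
      have hb : boolM (M2 A B C) p s = 1 := by
        simp only [boolM]; rw [if_neg]; omega
      have := hBool p s
      omega

end Aux

/-- Soundness: if a certificate exists, then no configuration accepted by the
`P`-automaton `A₀` (transitions `δ₀`, final states `F`) is reachable from the
initial configuration `(q₀, γ₀)`, i.e., `(q₀, γ₀) ∉ pre*(R)`. -/
theorem not_reachable_of_certificate
    {m : ℕ} {Γ : Type} [Fintype Γ] [DecidableEq Γ]
    (Q : Finset (Fin m)) (Δ : Finset ((Fin m × Γ) × (Fin m × List Γ)))
    (hΔ : ∀ r ∈ Δ, r.1.1 ∈ Q ∧ r.2.1 ∈ Q ∧ r.2.2.length ≤ 2)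
    (δ₀ : Finset (Fin m × Γ × Fin m)) (F : Finset (Fin m))
    (q₀ : Fin m) (hq₀ : q₀ ∈ Q) (γ₀ : Γ)
    (hcert : ∃ M MAB M1 M2, IsCertificate Q Δ δ₀ F q₀ γ₀ M MAB M1 M2) :
    ¬ ∃ c', Relation.ReflTransGen (PDSStep Δ) (q₀, [γ₀]) c' ∧
      AcceptsConfig δ₀ F c' := by
  rintro ⟨c', hreach, hacc⟩
  obtain ⟨M, MAB, M1, M2, hc⟩ := hcert
  have key : ∀ c : Fin m × List Γ, Relation.ReflTransGen (PDSStep Δ) c c' →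
      (∃ f ∈ F, PathS (Sat δ₀ Δ) c'.1 c'.2 f) →
      ∃ f ∈ F, PathS (Sat δ₀ Δ) c.1 c.2 f := by
    intro c h
    induction h using Relation.ReflTransGen.head_induction_on with
    | refl => exact id
    | head hstep _ ih =>
        intro haccS
        obtain ⟨f, hf, hpath⟩ := ih haccS
        obtain ⟨p, q, A, w, γ, hmem, hc1, hc2⟩ := hstep
        subst hc1
        subst hc2
        obtain ⟨-, -, hlen⟩ := hΔ _ hmem
        dsimp only at hpath
        obtain ⟨t, hw, hγ⟩ := pathS_append_split hpath
        refine ⟨f, hf, ?_⟩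
        show PathS (Sat δ₀ Δ) p (A :: γ) f
        rcases w with _ | ⟨B, _ | ⟨C, _ | ⟨D, rest⟩⟩⟩
        · exact PathS.cons (Sat.pop hmem) ((pathS_nil_inv hw) ▸ hγ)
        · exact PathS.cons (Sat.swap hmem (pathS_single_inv hw)) hγ
        · cases hw with
          | cons h1 h2 =>
            cases h2 with
            | cons h3 h4 =>
              exact PathS.cons
                (Sat.push hmem h1 ((pathS_nil_inv h4) ▸ h3)) hγ
        · simp at hlen
  obtain ⟨f, hf, hpath⟩ := hacc
  obtain ⟨g, hg, hpathS⟩ := key (q₀, [γ₀]) hreach ⟨f, hf, nfaPath_lift hpath⟩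
  have hsat : Sat δ₀ Δ q₀ γ₀ g := pathS_single_inv hpathS
  have h1 := sat_entry_pos hΔ hc hsat
  have h0 := hc.2.2 g hg
  omega
end
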